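/- Let θ ∈ ℕ with θ ≥ 1 and let f, g : T² → ℝ be smooth. Then for every p ∈ [1,∞), |∥f · g(θ·)∥_{L^p(T²)} − ∥f∥_{L^p(T²)}∥g∥_{L^p(T²)}| ≤ C_p θ^{−1/p}∥f∥_{C¹(T²)}∥g∥_{L^p(T²)}, where g(θ·) denotes the map x ↦ g(θx) and C_p depends only on p. -/

import Mathlib

open MeasureTheory Real Filter Topology ENNReal

noncomputable section

abbrev V2 : Type := ℝ × ℝ
abbrev V3 : Type := Fin 3 → ℝ

def Q2 : Set V2 := Set.Icc (0:ℝ) (2*π) ×ˢ Set.Icc (0:ℝ) (2*π)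

def pd1 (f : V2 → ℝ) (x : V2) : ℝ := fderiv ℝ f x (1, 0)
def pd2 (f : V2 → ℝ) (x : V2) : ℝ := fderiv ℝ f x (0, 1)

/-- `a·x = a₁x₁ + a₂x₂` for `a ∈ ℤ²`. -/
def adot (a : ℤ × ℤ) (x : V2) : ℝ := a.1 * x.1 + a.2 * x.2

/-- `2π`-periodicity in each variable. -/
def Per (f : V2 → ℝ) : Prop :=
  ∀ x : V2, f (x.1 + 2*π, x.2) = f x ∧ f (x.1, x.2 + 2*π) = f x

/-- The normalized (probability) measure `(2π)⁻² dx` on the fundamental domain of `T²`. -/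
def nmeas : Measure V2 := (ENNReal.ofReal ((2*π)^2))⁻¹ • (volume.restrict Q2)

/-- `L^p` norm with respect to the normalized measure. -/
def lpN (p : ℝ) (f : V2 → ℝ) : ℝ := (eLpNorm f (ENNReal.ofReal p) nmeas).toReal

def c0N (f : V2 → ℝ) : ℝ := sSup ((fun x => |f x|) '' Q2)

/-- `C¹` norm `∥f∥_{C⁰} + ∥∇f∥_{C⁰}`. -/
def c1N (f : V2 → ℝ) : ℝ := c0N f + sSup ((fun x => ‖fderiv ℝ f x‖) '' Q2)


def Iint (h : V2 → ℝ) : ℝ := ∫ x in (0:ℝ)..(2*π), ∫ y in (0:ℝ)..(2*π), h (x, y)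

lemma hQ2compact : IsCompact Q2 := (isCompact_Icc).prod isCompact_Icc

lemma setQ2 (u : V2 → ℝ) (hu : Continuous u) : (∫ x in Q2, u x) = Iint u := by
  have hπ : (0:ℝ) < π := Real.pi_pos
  have hInt : IntegrableOn u Q2 (volume : Measure V2) :=
    hu.continuousOn.integrableOn_compact hQ2compact
  rw [show (volume : Measure V2) = (volume : Measure ℝ).prod (volume : Measure ℝ) from
    MeasureTheory.Measure.volume_eq_prod ℝ ℝ] at hInt ⊢
  rw [Q2] at hInt ⊢
  rw [MeasureTheory.setIntegral_prod u hInt]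
  rw [Iint]
  rw [intervalIntegral.integral_of_le (by positivity : (0:ℝ) ≤ 2*π),
    ← MeasureTheory.integral_Icc_eq_integral_Ioc]
  apply MeasureTheory.setIntegral_congr_fun measurableSet_Icc
  intro x _
  show (∫ y in Set.Icc (0:ℝ) (2*π), u (x, y)) = ∫ y in (0:ℝ)..(2*π), u (x, y)
  rw [intervalIntegral.integral_of_le (by positivity : (0:ℝ) ≤ 2*π),
    ← MeasureTheory.integral_Icc_eq_integral_Ioc]

instance : IsFiniteMeasure nmeas := by
  constructor
  rw [nmeas]
  simp only [Measure.smul_apply, Measure.restrict_apply MeasurableSet.univ, Set.univ_inter,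
    smul_eq_mul]
  have h1 : volume Q2 < ⊤ := hQ2compact.measure_lt_top
  apply ENNReal.mul_lt_top _ h1
  rw [ENNReal.inv_lt_top, ENNReal.ofReal_pos]
  positivity

lemma lpN_eq (p : ℝ) (hp : 1 ≤ p) (h : V2 → ℝ) (hc : Continuous h) :
    lpN p h = ((1/(2*π))^2 * Iint (fun x => |h x| ^ p)) ^ p⁻¹ := by
  have hπ : (0:ℝ) < π := Real.pi_pos
  have hp0 : 0 < p := by linarith
  obtain ⟨M, hM⟩ : ∃ M, ∀ x ∈ Q2, ‖h x‖ ≤ M := by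
    rcases hQ2compact.exists_bound_of_continuousOn hc.continuousOn with ⟨M, hM⟩
    exact ⟨M, hM⟩
  have hmem : MemLp h (ENNReal.ofReal p) nmeas := by
    apply MemLp.of_bound hc.aestronglyMeasurable M
    rw [nmeas]
    apply Measure.ae_smul_measure
    rw [ae_restrict_iff' (hQ2compact.isClosed.measurableSet)]
    exact ae_of_all _ hM
  have h1 : ENNReal.ofReal p ≠ 0 := by simp [ENNReal.ofReal_eq_zero]; linarith
  have h2 : ENNReal.ofReal p ≠ ⊤ := ENNReal.ofReal_ne_top
  rw [lpN, hmem.eLpNorm_eq_integral_rpow_norm h1 h2, ENNReal.toReal_ofReal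
    (Real.rpow_nonneg (integral_nonneg (fun x => Real.rpow_nonneg (norm_nonneg _) _)) _)]
  rw [ENNReal.toReal_ofReal hp0.le]
  congr 1
  rw [nmeas, MeasureTheory.integral_smul_measure]
  simp only [smul_eq_mul]
  have e1 : ((ENNReal.ofReal ((2*π)^2))⁻¹).toReal = (1/(2*π))^2 := by
    rw [ENNReal.toReal_inv, ENNReal.toReal_ofReal (by positivity)]
    rw [one_div, inv_pow]
  rw [e1]
  congr 1
  have := setQ2 (fun x => ‖h x‖ ^ p) (by
    apply Continuous.rpow_const hc.norm
    intro x; right; linarith)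
  rw [this]
  rw [Iint, Iint]
  apply intervalIntegral.integral_congr
  intro x _
  apply intervalIntegral.integral_congr
  intro y _
  simp [Real.norm_eq_abs]

lemma per_scale (θ : ℕ) (ψ : ℝ → ℝ)
    (hψper : Function.Periodic ψ (2*π)) (i : ℕ) :
    (∫ t in ((i:ℝ)*(2*π/θ))..(((i:ℝ)+1)*(2*π/θ)), ψ ((θ:ℝ) * t)) =
      (θ:ℝ)⁻¹ * ∫ t in (0:ℝ)..(2*π), ψ t := by
  rcases Nat.eq_zero_or_pos θ with h | h
  · subst h; simp
  have hθ0 : (θ:ℝ) ≠ 0 := by positivity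
  rw [intervalIntegral.integral_comp_mul_left ψ hθ0]
  have h1 : (θ:ℝ) * ((i:ℝ)*(2*π/θ)) = 2*π*i := by field_simp
  have h2 : (θ:ℝ) * (((i:ℝ)+1)*(2*π/θ)) = 2*π*i + 2*π := by field_simp
  rw [h1, h2, hψper.intervalIntegral_add_eq (2*π*i) 0, zero_add, smul_eq_mul]

lemma lemA (θ : ℕ) (hθ : 1 ≤ θ) (φ ψ : ℝ → ℝ) (hφc : Continuous φ) (hψc : Continuous ψ)
    (hψper : Function.Periodic ψ (2*π)) (L : ℝ) (hL : 0 ≤ L)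
    (hφlip : ∀ a ∈ Set.Icc (0:ℝ) (2*π), ∀ b ∈ Set.Icc (0:ℝ) (2*π), |φ a - φ b| ≤ L * |a - b|) :
    |(∫ t in (0:ℝ)..(2*π), φ t * ψ ((θ:ℝ) * t)) -
      (1/(2*π)) * (∫ t in (0:ℝ)..(2*π), φ t) * (∫ t in (0:ℝ)..(2*π), ψ t)| ≤
    (4*π*L/θ) * ∫ t in (0:ℝ)..(2*π), |ψ t| := by
  have hπ : (0:ℝ) < π := Real.pi_pos
  have hθ0 : (0:ℝ) < θ := by exact_mod_cast hθ
  set T : ℝ := 2*π/θ with hT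
  have hT0 : 0 < T := by positivity
  set Iψ : ℝ := ∫ t in (0:ℝ)..(2*π), ψ t with hIψ
  set Jψ : ℝ := ∫ t in (0:ℝ)..(2*π), |ψ t| with hJψ
  have hJψ0 : 0 ≤ Jψ := intervalIntegral.integral_nonneg (by positivity) (fun t _ => abs_nonneg _)
  have habs : |Iψ| ≤ Jψ := intervalIntegral.abs_integral_le_integral_abs (by positivity)
  set m : ℝ := Iψ / (2*π) with hm
  have hψθ : Continuous fun t : ℝ => ψ ((θ:ℝ)*t) := hψc.comp (continuous_const.mul continuous_id)
  have hψθa : Continuous fun t : ℝ => |ψ ((θ:ℝ)*t)| := hψθ.abs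
  have hψpera : Function.Periodic (fun t => |ψ t|) (2*π) := fun x => by simp [hψper x]
  set a : ℕ → ℝ := fun i => (i:ℝ) * T with ha
  have hastep : ∀ i : ℕ, a (i+1) = a i + T := by intro i; simp only [ha]; push_cast; ring
  have ha0 : a 0 = 0 := by simp [ha]
  have haθ : a θ = 2*π := by simp only [ha, hT]; field_simp
  have hmono : ∀ i : ℕ, a i ≤ a (i+1) := by intro i; rw [hastep]; linarith
  have hmem : ∀ i : ℕ, i < θ → Set.Icc (a i) (a (i+1)) ⊆ Set.Icc 0 (2*π) := by
    intro i hi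
    apply Set.Icc_subset_Icc
    · simp only [ha]; positivity
    · rw [hastep]
      have h1 : (i:ℝ) + 1 ≤ θ := by exact_mod_cast hi
      have : a i + T = ((i:ℝ)+1) * T := by simp only [ha]; ring
      rw [this]
      calc ((i:ℝ)+1) * T ≤ (θ:ℝ) * T := by nlinarith
        _ = 2*π := by rw [hT]; field_simp
  have hscale : ∀ i : ℕ, (∫ t in (a i)..(a (i+1)), ψ ((θ:ℝ)*t)) = (θ:ℝ)⁻¹ * Iψ := by
    intro i
    have := per_scale θ ψ hψper i
    have e1 : a i = (i:ℝ)*(2*π/θ) := rfl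
    have e2 : a (i+1) = ((i:ℝ)+1)*(2*π/θ) := by rw [hastep]; simp only [hT]; ring
    rw [e1, e2, this]
  have hscalea : ∀ i : ℕ, (∫ t in (a i)..(a (i+1)), |ψ ((θ:ℝ)*t)|) = (θ:ℝ)⁻¹ * Jψ := by
    intro i
    have := per_scale θ (fun t => |ψ t|) hψpera i
    have e1 : a i = (i:ℝ)*(2*π/θ) := rfl
    have e2 : a (i+1) = ((i:ℝ)+1)*(2*π/θ) := by rw [hastep]; simp only [hT]; ring
    rw [e1, e2, this]
  set h : ℝ → ℝ := fun t => φ t * (ψ ((θ:ℝ)*t) - m) with hh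
  have hhc : Continuous h := hφc.mul (hψθ.sub continuous_const)
  have hsplit : (∫ t in (0:ℝ)..(2*π), h t) = ∑ i ∈ Finset.range θ, ∫ t in (a i)..(a (i+1)), h t := by
    rw [intervalIntegral.sum_integral_adjacent_intervals
      (fun i _ => hhc.intervalIntegrable _ _), ha0, haθ]
  have hpiece : ∀ i : ℕ, i < θ → |∫ t in (a i)..(a (i+1)), h t| ≤ L * T * ((2:ℝ)/θ) * Jψ := by
    intro i hi
    have hcancel : (∫ t in (a i)..(a (i+1)), (ψ ((θ:ℝ)*t) - m)) = 0 := by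
      rw [intervalIntegral.integral_sub (hψθ.intervalIntegrable _ _) intervalIntegrable_const,
        hscale i, intervalIntegral.integral_const, hastep i]
      simp only [smul_eq_mul, add_sub_cancel_left, hm, hT]
      field_simp
      ring
    have heq : (∫ t in (a i)..(a (i+1)), h t)
        = ∫ t in (a i)..(a (i+1)), (φ t - φ (a i)) * (ψ ((θ:ℝ)*t) - m) := by
      have e : ∀ t, h t = (φ t - φ (a i)) * (ψ ((θ:ℝ)*t) - m) + φ (a i) * (ψ ((θ:ℝ)*t) - m) := by
        intro t; simp only [hh]; ring
      simp_rw [e]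
      rw [intervalIntegral.integral_add (f := fun t => (φ t - φ (a i)) * (ψ ((θ:ℝ)*t) - m))
        (g := fun t => φ (a i) * (ψ ((θ:ℝ)*t) - m))
        (((hφc.sub continuous_const).mul (hψθ.sub continuous_const)).intervalIntegrable _ _)
        ((continuous_const.mul (hψθ.sub continuous_const)).intervalIntegrable _ _),
        intervalIntegral.integral_const_mul, hcancel, mul_zero, add_zero]
    rw [heq]
    have hmemi : a i ∈ Set.Icc (0:ℝ) (2*π) := hmem i hi ⟨le_refl _, hmono i⟩
    calc |∫ t in (a i)..(a (i+1)), (φ t - φ (a i)) * (ψ ((θ:ℝ)*t) - m)|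
        ≤ ∫ t in (a i)..(a (i+1)), |(φ t - φ (a i)) * (ψ ((θ:ℝ)*t) - m)| :=
          intervalIntegral.abs_integral_le_integral_abs (hmono i)
      _ ≤ ∫ t in (a i)..(a (i+1)), L * T * (|ψ ((θ:ℝ)*t)| + |m|) := by
          apply intervalIntegral.integral_mono_on (hmono i)
          · exact (((hφc.sub continuous_const).mul (hψθ.sub continuous_const)).abs).intervalIntegrable _ _
          · exact (continuous_const.mul (hψθa.add continuous_const)).intervalIntegrable _ _
          intro t ht
          rw [abs_mul]
          have h1 : |φ t - φ (a i)| ≤ L * T := by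
            have hlip := hφlip t (hmem i hi ht) (a i) hmemi
            have h2 : |t - a i| ≤ T := by
              rw [abs_of_nonneg (by linarith [ht.1])]
              have := ht.2; rw [hastep] at this; linarith
            calc |φ t - φ (a i)| ≤ L * |t - a i| := hlip
              _ ≤ L * T := by nlinarith
          have h2 : |ψ ((θ:ℝ)*t) - m| ≤ |ψ ((θ:ℝ)*t)| + |m| := abs_sub _ _
          have := mul_le_mul h1 h2 (abs_nonneg _) (by positivity)
          linarith
      _ = L * T * ((θ:ℝ)⁻¹ * Jψ + |m| * T) := by
          rw [intervalIntegral.integral_const_mul, intervalIntegral.integral_add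
            (hψθa.intervalIntegrable _ _) intervalIntegrable_const,
            hscalea i, intervalIntegral.integral_const, hastep i]
          simp only [smul_eq_mul, add_sub_cancel_left]
          ring
      _ ≤ L * T * ((2:ℝ)/θ) * Jψ := by
          have hmb : |m| * T ≤ (θ:ℝ)⁻¹ * Jψ := by
            have : |m| ≤ Jψ / (2*π) := by
              rw [hm, abs_div, abs_of_pos (by positivity : (0:ℝ) < 2*π)]
              exact div_le_div_of_nonneg_right habs (by positivity)
            calc |m| * T ≤ (Jψ/(2*π)) * T := by nlinarith
              _ = (θ:ℝ)⁻¹ * Jψ := by rw [hT]; field_simp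
          have : (θ:ℝ)⁻¹ * Jψ + |m| * T ≤ ((2:ℝ)/θ) * Jψ := by
            have e : ((2:ℝ)/θ) * Jψ = (θ:ℝ)⁻¹ * Jψ + (θ:ℝ)⁻¹ * Jψ := by field_simp; ring
            rw [e]; linarith
          calc L * T * ((θ:ℝ)⁻¹ * Jψ + |m| * T) ≤ L * T * (((2:ℝ)/θ) * Jψ) :=
              mul_le_mul_of_nonneg_left this (by positivity)
            _ = L * T * ((2:ℝ)/θ) * Jψ := by ring
  have hmain : |∫ t in (0:ℝ)..(2*π), h t| ≤ (4*π*L/θ) * Jψ := by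
    rw [hsplit]
    calc |∑ i ∈ Finset.range θ, ∫ t in (a i)..(a (i+1)), h t|
        ≤ ∑ i ∈ Finset.range θ, |∫ t in (a i)..(a (i+1)), h t| := Finset.abs_sum_le_sum_abs _ _
      _ ≤ ∑ i ∈ Finset.range θ, L * T * ((2:ℝ)/θ) * Jψ := by
          apply Finset.sum_le_sum; intro i hi; exact hpiece i (Finset.mem_range.mp hi)
      _ = (θ:ℝ) * (L * T * ((2:ℝ)/θ) * Jψ) := by
          rw [Finset.sum_const, Finset.card_range]; simp [nsmul_eq_mul]
      _ = (4*π*L/θ) * Jψ := by rw [hT]; field_simp; ring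
  have hdecomp : (∫ t in (0:ℝ)..(2*π), h t)
      = (∫ t in (0:ℝ)..(2*π), φ t * ψ ((θ:ℝ)*t)) - (1/(2*π)) * (∫ t in (0:ℝ)..(2*π), φ t) * Iψ := by
    have e : ∀ t, h t = φ t * ψ ((θ:ℝ)*t) - m * φ t := by intro t; simp only [hh]; ring
    simp_rw [e]
    rw [intervalIntegral.integral_sub (f := fun t => φ t * ψ ((θ:ℝ)*t)) (g := fun t => m * φ t)
      ((hφc.mul hψθ).intervalIntegrable _ _)
      ((continuous_const.mul hφc).intervalIntegrable _ _),
      intervalIntegral.integral_const_mul, hm]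
    ring
  rw [hdecomp] at hmain
  exact hmain

-- core rpow MVT bound
lemma rpow_core {p : ℝ} (hp : 1 ≤ p) {u v : ℝ} (hv : 0 ≤ v) (hvu : v ≤ u) :
    u ^ p - v ^ p ≤ p * u ^ (p-1) * (u - v) := by
  rcases eq_or_lt_of_le hvu with h | h
  · subst h; simp
  have hu0 : 0 ≤ u := le_trans hv hvu
  have hcont : Continuous fun x : ℝ => x ^ p := by
    apply continuous_iff_continuousAt.2
    intro x
    exact (Real.hasDerivAt_rpow_const (Or.inr hp)).continuousAt
  obtain ⟨c, hc, hder⟩ := exists_hasDerivAt_eq_slope (fun x => x ^ p)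
    (fun x => p * x ^ (p-1)) h (hcont.continuousOn)
    (fun x _ => Real.hasDerivAt_rpow_const (Or.inr hp))
  have hc0 : 0 ≤ c := le_trans hv (le_of_lt hc.1)
  have hcb : c ^ (p-1) ≤ u ^ (p-1) :=
    Real.rpow_le_rpow hc0 (le_of_lt hc.2) (by linarith)
  have := hder
  rw [eq_div_iff (by linarith : u - v ≠ 0)] at this
  have hp0 : 0 ≤ p := by linarith
  have hmm := mul_le_mul_of_nonneg_left hcb (mul_nonneg hp0 (by linarith : (0:ℝ) ≤ u - v))
  nlinarith [hmm]

lemma rpow_abs_lip {p : ℝ} (hp : 1 ≤ p) {a b M : ℝ} (ha : |a| ≤ M) (hb : |b| ≤ M) :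
    |(|a| ^ p - |b| ^ p)| ≤ p * M ^ (p-1) * |a - b| := by
  have hM0 : 0 ≤ M := le_trans (abs_nonneg a) ha
  have key : ∀ x y : ℝ, |x| ≤ M → |y| ≤ M → |y| ≤ |x| → |x| ^ p - |y| ^ p ≤ p * M ^ (p-1) * |x - y| := by
    intro x y hx hy hxy
    have h1 := rpow_core hp (abs_nonneg y) hxy
    have h2 : |x| ^ (p-1) ≤ M ^ (p-1) := Real.rpow_le_rpow (abs_nonneg x) hx (by linarith)
    have h3 : |x| - |y| ≤ |x - y| := abs_sub_abs_le_abs_sub x y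
    have hp0 : 0 ≤ p := by linarith
    have h4 := mul_le_mul h2 h3 (by linarith) (Real.rpow_nonneg hM0 (p-1))
    nlinarith [mul_le_mul_of_nonneg_left h4 hp0]
  rcases le_total (|b|) (|a|) with h | h
  · rw [abs_of_nonneg (sub_nonneg.2 (Real.rpow_le_rpow (abs_nonneg b) h (by linarith)))]
    exact key a b ha hb h
  · rw [abs_sub_comm, abs_of_nonneg (sub_nonneg.2 (Real.rpow_le_rpow (abs_nonneg a) h (by linarith)))]
    have := key b a hb ha h
    rwa [abs_sub_comm] at this

-- subadditivity of rpow with exponent in (0,1]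
lemma rpow_sub_le {c : ℝ} (hc0 : 0 ≤ c) (hc1 : c ≤ 1) {x y : ℝ} (hx : 0 ≤ x) (hy : 0 ≤ y) :
    |x ^ c - y ^ c| ≤ |x - y| ^ c := by
  have key : ∀ u v : ℝ, 0 ≤ v → v ≤ u → u ^ c - v ^ c ≤ (u - v) ^ c := by
    intro u v hv hvu
    have h1 : u ^ c ≤ (u - v) ^ c + v ^ c := by
      have kk := NNReal.rpow_add_le_add_rpow ((u - v).toNNReal) (v.toNNReal) hc0 hc1
      have he : (u - v).toNNReal + v.toNNReal = u.toNNReal := by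
        rw [← Real.toNNReal_add (by linarith) hv]
        congr 1; ring
      rw [he] at kk
      calc u ^ c = ((u.toNNReal : ℝ)) ^ c := by rw [Real.coe_toNNReal _ (le_trans hv hvu)]
        _ = ((u.toNNReal ^ c : NNReal) : ℝ) := by rw [← NNReal.coe_rpow]
        _ ≤ (((u - v).toNNReal ^ c + v.toNNReal ^ c : NNReal) : ℝ) := NNReal.coe_le_coe.2 kk
        _ = (u - v) ^ c + v ^ c := by
            rw [NNReal.coe_add, NNReal.coe_rpow, NNReal.coe_rpow,
              Real.coe_toNNReal _ (by linarith : (0:ℝ) ≤ u - v), Real.coe_toNNReal _ hv]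
    linarith
  rcases le_total y x with h | h
  · rw [abs_of_nonneg (sub_nonneg.2 (Real.rpow_le_rpow hy h hc0)),
      abs_of_nonneg (sub_nonneg.2 h)]
    exact key x y hy h
  · rw [abs_sub_comm, abs_of_nonneg (sub_nonneg.2 (Real.rpow_le_rpow hx h hc0)),
      abs_sub_comm, abs_of_nonneg (sub_nonneg.2 h)]
    exact key y x hx h

lemma key (θ : ℕ) (hθ : 1 ≤ θ) (F G : V2 → ℝ) (hFc : Continuous F) (hGc : Continuous G)
    (hFper : Per F) (hGper : Per G) (hG0 : ∀ x, 0 ≤ G x) (L : ℝ) (hL : 0 ≤ L)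
    (hlip : ∀ x ∈ Q2, ∀ y ∈ Q2, |F x - F y| ≤ L * (|x.1 - y.1| + |x.2 - y.2|)) :
    |Iint (fun x => F x * G ((θ:ℝ)*x.1, (θ:ℝ)*x.2)) - (1/(2*π))^2 * Iint F * Iint G|
      ≤ (8*π*L/θ) * Iint G := by
  have hπ : (0:ℝ) < π := Real.pi_pos
  have hθ0 : (0:ℝ) < θ := by exact_mod_cast hθ
  set Φ : ℝ → ℝ := fun x => ∫ y in (0:ℝ)..(2*π), F (x, y) with hΦ
  set W : ℝ → ℝ := fun u => ∫ y in (0:ℝ)..(2*π), G (u, y) with hW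
  have hΦc : Continuous Φ :=
    intervalIntegral.continuous_parametric_intervalIntegral_of_continuous' (by exact hFc) _ _
  have hWc : Continuous W :=
    intervalIntegral.continuous_parametric_intervalIntegral_of_continuous' (by exact hGc) _ _
  have hWper : Function.Periodic W (2*π) := by
    intro u
    apply intervalIntegral.integral_congr
    intro y _
    exact (hGper (u, y)).1
  have hW0 : ∀ u, 0 ≤ W u := fun u =>
    intervalIntegral.integral_nonneg (by positivity) (fun y _ => hG0 _)
  have hIG : Iint G = ∫ u in (0:ℝ)..(2*π), W u := rfl
  have hIGW : (∫ x in (0:ℝ)..(2*π), W ((θ:ℝ)*x)) = Iint G := by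
    have h0 := lemA θ hθ (fun _ => 1) W continuous_const hWc hWper 0 le_rfl
      (by intro a _ b _; simp)
    simp only [one_mul, intervalIntegral.integral_const, smul_eq_mul, mul_one, sub_zero,
      zero_div, zero_mul, mul_zero] at h0
    have h2 := abs_eq_zero.mp (le_antisymm h0 (abs_nonneg _))
    have h4 := sub_eq_zero.mp h2
    rw [h4, hIG]
    field_simp
  have hIG0 : 0 ≤ Iint G := by
    rw [hIG]; exact intervalIntegral.integral_nonneg (by positivity) (fun u _ => hW0 u)
  have hWθ : Continuous fun x : ℝ => W ((θ:ℝ)*x) := hWc.comp (continuous_const.mul continuous_id)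
  -- inner estimate
  set Df : ℝ → ℝ := fun x =>
    (∫ y in (0:ℝ)..(2*π), F (x, y) * G ((θ:ℝ)*x, (θ:ℝ)*y)) - (1/(2*π)) * Φ x * W ((θ:ℝ)*x)
    with hDf
  have hJc : Continuous fun x : ℝ => ∫ y in (0:ℝ)..(2*π), F (x, y) * G ((θ:ℝ)*x, (θ:ℝ)*y) := by
    apply intervalIntegral.continuous_parametric_intervalIntegral_of_continuous'
    apply Continuous.mul
    · exact hFc.comp (by fun_prop)
    · exact hGc.comp (by fun_prop)
  have hDfc : Continuous Df := by
    apply hJc.sub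
    exact (continuous_const.mul hΦc).mul hWθ
  have hDbound : ∀ x ∈ Set.Icc (0:ℝ) (2*π), |Df x| ≤ (4*π*L/θ) * W ((θ:ℝ)*x) := by
    intro x hx
    have hA := lemA θ hθ (fun y => F (x, y)) (fun s => G ((θ:ℝ)*x, s))
      (hFc.comp (by fun_prop)) (hGc.comp (by fun_prop))
      (fun s => (hGper ((θ:ℝ)*x, s)).2) L hL
      (by
        intro a ha b hb
        have := hlip (x, a) ⟨hx, ha⟩ (x, b) ⟨hx, hb⟩
        simpa using this)
    have habs : (∫ t in (0:ℝ)..(2*π), |G ((θ:ℝ)*x, t)|) = W ((θ:ℝ)*x) := by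
      apply intervalIntegral.integral_congr
      intro y _
      exact abs_of_nonneg (hG0 _)
    rw [habs] at hA
    exact hA
  -- outer estimate
  have hΦlip : ∀ a ∈ Set.Icc (0:ℝ) (2*π), ∀ b ∈ Set.Icc (0:ℝ) (2*π),
      |Φ a - Φ b| ≤ (2*π*L) * |a - b| := by
    intro a ha b hb
    have hFa : Continuous fun y : ℝ => F (a, y) := hFc.comp (continuous_const.prodMk continuous_id)
    have hFb : Continuous fun y : ℝ => F (b, y) := hFc.comp (continuous_const.prodMk continuous_id)
    have e : Φ a - Φ b = ∫ y in (0:ℝ)..(2*π), (F (a, y) - F (b, y)) := by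
      rw [intervalIntegral.integral_sub (hFa.intervalIntegrable _ _) (hFb.intervalIntegrable _ _)]
    rw [e]
    calc |∫ y in (0:ℝ)..(2*π), (F (a, y) - F (b, y))|
        ≤ ∫ y in (0:ℝ)..(2*π), |F (a, y) - F (b, y)| :=
          intervalIntegral.abs_integral_le_integral_abs (by positivity)
      _ ≤ ∫ y in (0:ℝ)..(2*π), L * |a - b| := by
          apply intervalIntegral.integral_mono_on (by positivity)
          · exact (hFa.sub hFb).abs.intervalIntegrable _ _
          · exact intervalIntegrable_const
          intro y hy
          have := hlip (a, y) ⟨ha, hy⟩ (b, y) ⟨hb, hy⟩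
          simpa using this
      _ = (2*π*L) * |a - b| := by
          rw [intervalIntegral.integral_const]; simp [smul_eq_mul]; ring
  have houter := lemA θ hθ Φ W hΦc hWc hWper (2*π*L) (by positivity) hΦlip
  have habsW : (∫ t in (0:ℝ)..(2*π), |W t|) = Iint G := by
    rw [hIG]
    apply intervalIntegral.integral_congr
    intro u _
    exact abs_of_nonneg (hW0 u)
  rw [habsW] at houter
  -- combine
  have hsplitJ : Iint (fun x => F x * G ((θ:ℝ)*x.1, (θ:ℝ)*x.2))
      = (∫ x in (0:ℝ)..(2*π), (1/(2*π)) * Φ x * W ((θ:ℝ)*x)) + ∫ x in (0:ℝ)..(2*π), Df x := by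
    rw [← intervalIntegral.integral_add (f := fun x => (1/(2*π)) * Φ x * W ((θ:ℝ)*x)) (g := Df)
      (((continuous_const.mul hΦc).mul hWθ).intervalIntegrable _ _)
      (hDfc.intervalIntegrable _ _)]
    apply intervalIntegral.integral_congr
    intro x _
    simp only [hDf]
    ring
  have hDint : |∫ x in (0:ℝ)..(2*π), Df x| ≤ (4*π*L/θ) * Iint G := by
    calc |∫ x in (0:ℝ)..(2*π), Df x| ≤ ∫ x in (0:ℝ)..(2*π), |Df x| :=
          intervalIntegral.abs_integral_le_integral_abs (by positivity)
      _ ≤ ∫ x in (0:ℝ)..(2*π), (4*π*L/θ) * W ((θ:ℝ)*x) := by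
          apply intervalIntegral.integral_mono_on (by positivity)
          · exact hDfc.abs.intervalIntegrable _ _
          · exact (continuous_const.mul hWθ).intervalIntegrable _ _
          exact hDbound
      _ = (4*π*L/θ) * Iint G := by
          rw [intervalIntegral.integral_const_mul, hIGW]
  have hfirst : (∫ x in (0:ℝ)..(2*π), (1/(2*π)) * Φ x * W ((θ:ℝ)*x))
      = (1/(2*π)) * ∫ x in (0:ℝ)..(2*π), Φ x * W ((θ:ℝ)*x) := by
    rw [← intervalIntegral.integral_const_mul]
    apply intervalIntegral.integral_congr
    intro x _; ring
  have hIF : Iint F = ∫ x in (0:ℝ)..(2*π), Φ x := rfl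
  have e2 : |(∫ x in (0:ℝ)..(2*π), (1/(2*π)) * Φ x * W ((θ:ℝ)*x))
      - (1/(2*π))^2 * Iint F * Iint G| ≤ (1/(2*π)) * ((4*π*(2*π*L)/θ) * Iint G) := by
    rw [hfirst]
    have : (1/(2*π))^2 * Iint F * Iint G
        = (1/(2*π)) * ((1/(2*π)) * (∫ x in (0:ℝ)..(2*π), Φ x) * (∫ t in (0:ℝ)..(2*π), W t)) := by
      rw [hIF, hIG]; ring
    rw [this, ← mul_sub, abs_mul, abs_of_pos (by positivity : (0:ℝ) < 1/(2*π))]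
    exact mul_le_mul_of_nonneg_left houter (by positivity)
  calc |Iint (fun x => F x * G ((θ:ℝ)*x.1, (θ:ℝ)*x.2)) - (1/(2*π))^2 * Iint F * Iint G|
      ≤ |(∫ x in (0:ℝ)..(2*π), (1/(2*π)) * Φ x * W ((θ:ℝ)*x)) - (1/(2*π))^2 * Iint F * Iint G|
        + |∫ x in (0:ℝ)..(2*π), Df x| := by
        rw [hsplitJ]
        have := abs_add_le ((∫ x in (0:ℝ)..(2*π), (1/(2*π)) * Φ x * W ((θ:ℝ)*x))
          - (1/(2*π))^2 * Iint F * Iint G) (∫ x in (0:ℝ)..(2*π), Df x)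
        calc |(∫ x in (0:ℝ)..(2*π), (1/(2*π)) * Φ x * W ((θ:ℝ)*x)) + (∫ x in (0:ℝ)..(2*π), Df x)
            - (1/(2*π))^2 * Iint F * Iint G|
            = |((∫ x in (0:ℝ)..(2*π), (1/(2*π)) * Φ x * W ((θ:ℝ)*x))
              - (1/(2*π))^2 * Iint F * Iint G) + (∫ x in (0:ℝ)..(2*π), Df x)| := by congr 1; ring
          _ ≤ _ := this
    _ ≤ (1/(2*π)) * ((4*π*(2*π*L)/θ) * Iint G) + (4*π*L/θ) * Iint G := add_le_add e2 hDint
    _ = (8*π*L/θ) * Iint G := by field_simp; ring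

lemma Iint_nonneg (h : V2 → ℝ) (h0 : ∀ x, 0 ≤ h x) : 0 ≤ Iint h := by
  have hπ : (0:ℝ) < π := Real.pi_pos
  apply intervalIntegral.integral_nonneg (by positivity)
  intro x _
  exact intervalIntegral.integral_nonneg (by positivity) (fun y _ => h0 _)


/-- decorrelation, Lemma 4.3: for `θ ∈ ℕ`,
`|∥f g(θ·)∥_{L^p} − ∥f∥_{L^p}∥g∥_{L^p}| ≲_p θ^{−1/p} ∥f∥_{C¹} ∥g∥_{L^p}`. -/
theorem stmt12 (p : ℝ) (hp : 1 ≤ p) :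
    ∃ C : ℝ, 0 < C ∧ ∀ θ : ℕ, 1 ≤ θ →
      ∀ f g : V2 → ℝ, ContDiff ℝ (⊤ : ℕ∞) f → Per f → ContDiff ℝ (⊤ : ℕ∞) g → Per g →
        |lpN p (fun x => f x * g ((θ:ℝ)*x.1, (θ:ℝ)*x.2)) - lpN p f * lpN p g|
          ≤ C * (θ:ℝ) ^ (-(1/p)) * c1N f * lpN p g := by
  have hπ : (0:ℝ) < π := Real.pi_pos
  have hp0 : (0:ℝ) < p := by linarith
  refine ⟨(8*π*p) ^ p⁻¹, Real.rpow_pos_of_pos (by positivity) _, ?_⟩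
  intro θ hθ f g hf hfper hg hgper
  have hθ0 : (0:ℝ) < θ := by exact_mod_cast hθ
  have hfc : Continuous f := hf.continuous
  have hgc : Continuous g := hg.continuous
  -- bounds
  set M := c0N f with hMdef
  set K := sSup ((fun x => ‖fderiv ℝ f x‖) '' Q2) with hKdef
  have hQne : Q2.Nonempty := ⟨((0:ℝ),(0:ℝ)), ⟨⟨le_rfl, by positivity⟩, ⟨le_rfl, by positivity⟩⟩⟩
  have hMbdd : BddAbove ((fun x => |f x|) '' Q2) :=
    (hQ2compact.image hfc.abs).bddAbove
  have hKbdd : BddAbove ((fun x => ‖fderiv ℝ f x‖) '' Q2) :=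
    (hQ2compact.image (hf.continuous_fderiv (by simp)).norm).bddAbove
  have hM : ∀ x ∈ Q2, |f x| ≤ M := fun x hx => le_csSup hMbdd ⟨x, hx, rfl⟩
  have hK : ∀ x ∈ Q2, ‖fderiv ℝ f x‖ ≤ K := fun x hx => le_csSup hKbdd ⟨x, hx, rfl⟩
  have hM0 : 0 ≤ M := le_trans (abs_nonneg _) (hM _ hQne.some_mem)
  have hK0 : 0 ≤ K := le_trans (norm_nonneg _) (hK _ hQne.some_mem)
  -- Lipschitz bound for f on Q2
  have hconv : Convex ℝ Q2 := (convex_Icc _ _).prod (convex_Icc _ _)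
  have hflip : ∀ x ∈ Q2, ∀ y ∈ Q2, |f x - f y| ≤ K * ‖x - y‖ := by
    intro x hx y hy
    have := hconv.norm_image_sub_le_of_norm_fderiv_le
      (fun z _ => (hf.differentiable (by simp)).differentiableAt) hK hy hx
    simpa [Real.norm_eq_abs] using this
  set L := p * M ^ (p-1) * K with hLdef
  have hL0 : 0 ≤ L := by
    apply mul_nonneg (mul_nonneg (by linarith) (Real.rpow_nonneg hM0 _)) hK0
  set F := fun x : V2 => |f x| ^ p with hFdef
  set G := fun x : V2 => |g x| ^ p with hGdef
  have hFc : Continuous F := hfc.abs.rpow_const (fun x => Or.inr (by linarith))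
  have hGc : Continuous G := hgc.abs.rpow_const (fun x => Or.inr (by linarith))
  have hFper : Per F := by
    intro x
    constructor
    · simp only [hFdef]; rw [(hfper x).1]
    · simp only [hFdef]; rw [(hfper x).2]
  have hGper : Per G := by
    intro x
    constructor
    · simp only [hGdef]; rw [(hgper x).1]
    · simp only [hGdef]; rw [(hgper x).2]
  have hG0 : ∀ x, 0 ≤ G x := fun x => Real.rpow_nonneg (abs_nonneg _) _
  have hFlip : ∀ x ∈ Q2, ∀ y ∈ Q2, |F x - F y| ≤ L * (|x.1 - y.1| + |x.2 - y.2|) := by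
    intro x hx y hy
    have h1 : |F x - F y| ≤ p * M ^ (p-1) * |f x - f y| :=
      rpow_abs_lip hp (hM x hx) (hM y hy)
    have h2 : |f x - f y| ≤ K * ‖x - y‖ := hflip x hx y hy
    have h3 : ‖x - y‖ ≤ |x.1 - y.1| + |x.2 - y.2| := by
      rw [Prod.norm_def]
      simp only [Prod.fst_sub, Prod.snd_sub, Real.norm_eq_abs]
      exact max_le (le_add_of_nonneg_right (abs_nonneg _))
        (le_add_of_nonneg_left (abs_nonneg _))
    have hpM : 0 ≤ p * M ^ (p-1) := mul_nonneg (by linarith) (Real.rpow_nonneg hM0 _)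
    calc |F x - F y| ≤ p * M ^ (p-1) * (K * ‖x - y‖) := by
          apply le_trans h1 (mul_le_mul_of_nonneg_left h2 hpM)
      _ ≤ p * M ^ (p-1) * (K * (|x.1 - y.1| + |x.2 - y.2|)) := by
          apply mul_le_mul_of_nonneg_left (mul_le_mul_of_nonneg_left h3 hK0) hpM
      _ = L * (|x.1 - y.1| + |x.2 - y.2|) := by rw [hLdef]; ring
  have hkey := key θ hθ F G hFc hGc hFper hGper hG0 L hL0 hFlip
  -- abbreviations
  set X := (1/(2*π))^2 * Iint (fun x => F x * G ((θ:ℝ)*x.1, (θ:ℝ)*x.2)) with hXdef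
  set A := (1/(2*π))^2 * Iint F with hAdef
  set B := (1/(2*π))^2 * Iint G with hBdef
  have hX0 : 0 ≤ X := by
    apply mul_nonneg (by positivity)
    apply Iint_nonneg
    intro x
    exact mul_nonneg (Real.rpow_nonneg (abs_nonneg _) _) (hG0 _)
  have hA0 : 0 ≤ A := mul_nonneg (by positivity)
    (Iint_nonneg _ (fun x => Real.rpow_nonneg (abs_nonneg _) _))
  have hB0 : 0 ≤ B := mul_nonneg (by positivity) (Iint_nonneg _ hG0)
  -- lp identities
  have e1 : lpN p f = A ^ p⁻¹ := lpN_eq p hp f hfc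
  have e2 : lpN p g = B ^ p⁻¹ := lpN_eq p hp g hgc
  have hgθc : Continuous fun x : V2 => g ((θ:ℝ)*x.1, (θ:ℝ)*x.2) := by
    apply hgc.comp
    fun_prop
  have e3 : lpN p (fun x => f x * g ((θ:ℝ)*x.1, (θ:ℝ)*x.2)) = X ^ p⁻¹ := by
    rw [lpN_eq p hp (fun x => f x * g ((θ:ℝ)*x.1, (θ:ℝ)*x.2)) (hfc.mul hgθc)]
    have he : (fun x : V2 => |f x * g ((θ:ℝ)*x.1, (θ:ℝ)*x.2)| ^ p)
        = (fun x => F x * G ((θ:ℝ)*x.1, (θ:ℝ)*x.2)) := by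
      funext x
      rw [abs_mul, Real.mul_rpow (abs_nonneg _) (abs_nonneg _)]
    rw [he, hXdef]
  -- main estimate
  have hXAB : |X - A * B| ≤ (8*π*p*(c1N f)^p) * (θ:ℝ)⁻¹ * B := by
    have h1 : |X - A * B|
        = (1/(2*π))^2 * |Iint (fun x => F x * G ((θ:ℝ)*x.1, (θ:ℝ)*x.2))
            - (1/(2*π))^2 * Iint F * Iint G| := by
      have hd : X - A * B = (1/(2*π))^2 * (Iint (fun x => F x * G ((θ:ℝ)*x.1, (θ:ℝ)*x.2))
          - (1/(2*π))^2 * Iint F * Iint G) := by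
        rw [hXdef, hAdef, hBdef]; ring
      rw [hd, abs_mul, abs_of_pos (by positivity : (0:ℝ) < (1/(2*π))^2)]
    have h2 : L ≤ p * (c1N f) ^ p := by
      have hc1 : c1N f = M + K := rfl
      rcases eq_or_lt_of_le (by positivity : (0:ℝ) ≤ M + K) with h | h
      · have hK' : K = 0 := by linarith [hM0, hK0, h.symm]
        rw [hLdef, hK', mul_zero]
        exact mul_nonneg hp0.le (Real.rpow_nonneg (by rw [hc1]; positivity) _)
      · have hMb : M ^ (p-1) ≤ (M+K) ^ (p-1) :=
          Real.rpow_le_rpow hM0 (by linarith) (by linarith)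
        have : L ≤ p * (M+K) ^ (p-1) * (M+K) := by
          rw [hLdef]
          apply mul_le_mul (mul_le_mul_of_nonneg_left hMb (by linarith)) (by linarith) hK0
          positivity
        calc L ≤ p * (M+K) ^ (p-1) * (M+K) := this
          _ = p * (M+K) ^ p := by
              rw [mul_assoc, ← Real.rpow_add_one (ne_of_gt h) (p-1)]
              norm_num
          _ = p * (c1N f) ^ p := by rw [hc1]
    calc |X - A * B| = (1/(2*π))^2 * |Iint (fun x => F x * G ((θ:ℝ)*x.1, (θ:ℝ)*x.2))
            - (1/(2*π))^2 * Iint F * Iint G| := h1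
      _ ≤ (1/(2*π))^2 * ((8*π*L/θ) * Iint G) :=
          mul_le_mul_of_nonneg_left hkey (by positivity)
      _ = (8*π*L) * (θ:ℝ)⁻¹ * B := by rw [hBdef, div_eq_mul_inv]; ring
      _ ≤ (8*π*p*(c1N f)^p) * (θ:ℝ)⁻¹ * B := by
          have h8 : 8*π*L ≤ 8*π*(p * (c1N f) ^ p) := by nlinarith
          apply mul_le_mul_of_nonneg_right (mul_le_mul_of_nonneg_right _ (by positivity)) hB0
          linarith
  -- conclude via rpow
  have hc0 : (0:ℝ) ≤ p⁻¹ := by positivity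
  have hc1' : p⁻¹ ≤ 1 := by
    rw [inv_le_one_iff₀]; right; exact hp
  have hAB0 : 0 ≤ A * B := mul_nonneg hA0 hB0
  have hfinal : |lpN p (fun x => f x * g ((θ:ℝ)*x.1, (θ:ℝ)*x.2)) - lpN p f * lpN p g|
      ≤ ((8*π*p) * ((c1N f)^p * ((θ:ℝ)⁻¹ * B))) ^ p⁻¹ := by
    rw [e1, e2, e3, ← Real.mul_rpow hA0 hB0]
    calc |X ^ p⁻¹ - (A * B) ^ p⁻¹| ≤ |X - A * B| ^ p⁻¹ := rpow_sub_le hc0 hc1' hX0 hAB0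
      _ ≤ ((8*π*p) * ((c1N f)^p * ((θ:ℝ)⁻¹ * B))) ^ p⁻¹ := by
          apply Real.rpow_le_rpow (abs_nonneg _) _ hc0
          calc |X - A*B| ≤ (8*π*p*(c1N f)^p) * (θ:ℝ)⁻¹ * B := hXAB
            _ = (8*π*p) * ((c1N f)^p * ((θ:ℝ)⁻¹ * B)) := by ring
  have hc1N0 : 0 ≤ c1N f := by
    have : c1N f = M + K := rfl
    rw [this]; positivity
  have hexp : ((8*π*p) * ((c1N f)^p * ((θ:ℝ)⁻¹ * B))) ^ p⁻¹
      = (8*π*p) ^ p⁻¹ * ((θ:ℝ) ^ (-(1/p)) * (c1N f * B ^ p⁻¹)) := by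
    rw [Real.mul_rpow (by positivity) (mul_nonneg (Real.rpow_nonneg hc1N0 _)
      (mul_nonneg (by positivity) hB0))]
    rw [Real.mul_rpow (Real.rpow_nonneg hc1N0 _) (mul_nonneg (by positivity) hB0)]
    rw [Real.mul_rpow (by positivity) hB0]
    have ha : ((c1N f)^p)^p⁻¹ = c1N f := by
      rw [← Real.rpow_mul hc1N0, mul_inv_cancel₀ (ne_of_gt hp0), Real.rpow_one]
    have hb : ((θ:ℝ)⁻¹)^p⁻¹ = (θ:ℝ)^(-(1/p)) := by
      rw [Real.inv_rpow (le_of_lt hθ0), Real.rpow_neg (le_of_lt hθ0), one_div]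
    rw [ha, hb]
    ring
  calc |lpN p (fun x => f x * g ((θ:ℝ)*x.1, (θ:ℝ)*x.2)) - lpN p f * lpN p g|
      ≤ ((8*π*p) * ((c1N f)^p * ((θ:ℝ)⁻¹ * B))) ^ p⁻¹ := hfinal
    _ = (8*π*p) ^ p⁻¹ * ((θ:ℝ) ^ (-(1/p)) * (c1N f * B ^ p⁻¹)) := hexp
    _ = (8*π*p) ^ p⁻¹ * (θ:ℝ) ^ (-(1/p)) * c1N f * lpN p g := by rw [e2]; ring
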